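/- arXiv:1807.04356 — 14 statements merged into one kernel-verified Lean document; each statement's English description precedes it below -/
import Mathlib

section
/- If V : 𝒜 × ℋ → ℝ is AoI-monotone, then the Bellman update T V is AoI-monotone; that is, for every h ∈ ℋ and all states A¹ = (Al¹, Ar¹), A² = (Al², Ar²) ∈ 𝒜 with Al¹ ≤ Al² and Ar¹ ≤ Ar², one has (T V)(A¹, h) ≤ (T V)(A², h). -/
open Finset

namespace AoI

/-- Membership in the AoI state space `𝒜 = {1,…,Âl} × {1,…,Âr}`. -/
def memA (Al_max Ar_max : ℕ) (A : ℕ × ℕ) : Prop :=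
  1 ≤ A.1 ∧ A.1 ≤ Al_max ∧ 1 ≤ A.2 ∧ A.2 ≤ Ar_max

/-- The AoI transition map: action `w = (s, u)` with `true = 1`. -/
def next (Al_max Ar_max : ℕ) (A : ℕ × ℕ) (w : Bool × Bool) : ℕ × ℕ :=
  (if w.1 then 1 else min (A.1 + 1) Al_max,
   if w.2 then min (A.1 + 1) Ar_max else min (A.2 + 1) Ar_max)

/-- The Lagrange cost `L(A,h,w) = Ar + λ (s Cs + u Cu(h))`. -/
def Lcost (Cs : ℝ) (Cu : ℝ → ℝ) (lam : ℝ) (A : ℕ × ℕ) (h : ℝ) (w : Bool × Bool) : ℝ :=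
  (A.2 : ℝ) + lam * ((if w.1 then Cs else 0) + (if w.2 then Cu h else 0))

/-- The state–action cost `J_V(A,h,w) = L(A,h,w) + Σ_{h'∈ℋ} p(h') V(next(A,w), h')`. -/
def Jcost (Al_max Ar_max : ℕ) (H : Finset ℝ) (p : ℝ → ℝ) (Cs : ℝ) (Cu : ℝ → ℝ)
    (lam : ℝ) (V : ℕ × ℕ → ℝ → ℝ) (A : ℕ × ℕ) (h : ℝ) (w : Bool × Bool) : ℝ :=
  Lcost Cs Cu lam A h w + ∑ h' ∈ H, p h' * V (next Al_max Ar_max A w) h'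

/-- The Bellman value-iteration operator `(T V)(A,h) = min_{w∈𝒲} J_V(A,h,w)`. -/
def Tbell (Al_max Ar_max : ℕ) (H : Finset ℝ) (p : ℝ → ℝ) (Cs : ℝ) (Cu : ℝ → ℝ)
    (lam : ℝ) (V : ℕ × ℕ → ℝ → ℝ) (A : ℕ × ℕ) (h : ℝ) : ℝ :=
  min (min (Jcost Al_max Ar_max H p Cs Cu lam V A h (false, false))
           (Jcost Al_max Ar_max H p Cs Cu lam V A h (false, true)))
      (min (Jcost Al_max Ar_max H p Cs Cu lam V A h (true, false))
           (Jcost Al_max Ar_max H p Cs Cu lam V A h (true, true)))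

/-- `V` is AoI-monotone: for every channel state `h ∈ ℋ`, `V((Al,Ar),h)` is
nondecreasing in `Al` and in `Ar` on the state space `𝒜`. -/
def AoIMonotone (Al_max Ar_max : ℕ) (H : Finset ℝ) (V : ℕ × ℕ → ℝ → ℝ) : Prop :=
  ∀ h ∈ H, ∀ A1 A2 : ℕ × ℕ, memA Al_max Ar_max A1 → memA Al_max Ar_max A2 →
    A1.1 ≤ A2.1 → A1.2 ≤ A2.2 → V A1 h ≤ V A2 h

/-- `V` is nonincreasing in the channel state on `ℋ`. -/
def ChanAntitone (Al_max Ar_max : ℕ) (H : Finset ℝ) (V : ℕ × ℕ → ℝ → ℝ) : Prop :=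
  ∀ A : ℕ × ℕ, memA Al_max Ar_max A → ∀ h1 ∈ H, ∀ h2 ∈ H, h1 ≤ h2 → V A h2 ≤ V A h1

/-- Action `w` dominates action `w'` at state `(A,h)` with respect to `V`:
`J_V(A,h,w) − J_V(A,h,w') ≤ 0`. -/
def Dominates (Al_max Ar_max : ℕ) (H : Finset ℝ) (p : ℝ → ℝ) (Cs : ℝ) (Cu : ℝ → ℝ)
    (lam : ℝ) (V : ℕ × ℕ → ℝ → ℝ) (A : ℕ × ℕ) (h : ℝ) (w w' : Bool × Bool) : Prop :=
  Jcost Al_max Ar_max H p Cs Cu lam V A h w ≤ Jcost Al_max Ar_max H p Cs Cu lam V A h w'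

/-- `pI` first-order stochastically dominates `pJ` on `ℋ`. -/
def FOSD (H : Finset ℝ) (pI pJ : ℝ → ℝ) : Prop :=
  ∀ f : ℝ → ℝ, (∀ h1 ∈ H, ∀ h2 ∈ H, h1 ≤ h2 → f h1 ≤ f h2) →
    ∑ h ∈ H, pJ h * f h ≤ ∑ h ∈ H, pI h * f h

theorem bellman_preserves_aoi_monotone (Al_max Ar_max : ℕ) (hAl : 1 ≤ Al_max) (hAr : 1 ≤ Ar_max)
    (H : Finset ℝ) (hH : H.Nonempty)
    (p : ℝ → ℝ) (hp0 : ∀ h ∈ H, 0 ≤ p h) (hp1 : ∑ h ∈ H, p h = 1)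
    (Cs : ℝ) (hCs : 0 ≤ Cs) (Cu : ℝ → ℝ) (hCu : ∀ h ∈ H, 0 ≤ Cu h)
    (lam : ℝ) (hlam : 0 ≤ lam)
    (V : ℕ × ℕ → ℝ → ℝ) (hV : AoIMonotone Al_max Ar_max H V) :
    AoIMonotone Al_max Ar_max H (Tbell Al_max Ar_max H p Cs Cu lam V) := by
  intro h hh A1 A2 hA1 hA2 h1 h2
  obtain ⟨hA11, hA12, hA13, hA14⟩ := hA1
  obtain ⟨hA21, hA22, hA23, hA24⟩ := hA2
  have key : ∀ w : Bool × Bool,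
      Jcost Al_max Ar_max H p Cs Cu lam V A1 h w ≤
      Jcost Al_max Ar_max H p Cs Cu lam V A2 h w := by
    intro w
    have hmem1 : memA Al_max Ar_max (next Al_max Ar_max A1 w) := by
      refine ⟨?_, ?_, ?_, ?_⟩ <;> simp [next] <;> split <;> omega
    have hmem2 : memA Al_max Ar_max (next Al_max Ar_max A2 w) := by
      refine ⟨?_, ?_, ?_, ?_⟩ <;> simp [next] <;> split <;> omega
    have hle1 : (next Al_max Ar_max A1 w).1 ≤ (next Al_max Ar_max A2 w).1 := by
      simp only [next]; split <;> omega
    have hle2 : (next Al_max Ar_max A1 w).2 ≤ (next Al_max Ar_max A2 w).2 := by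
      simp only [next]; split <;> omega
    have hsum : ∑ h' ∈ H, p h' * V (next Al_max Ar_max A1 w) h' ≤
        ∑ h' ∈ H, p h' * V (next Al_max Ar_max A2 w) h' :=
      Finset.sum_le_sum fun h' hh' =>
        mul_le_mul_of_nonneg_left (hV h' hh' _ _ hmem1 hmem2 hle1 hle2) (hp0 h' hh')
    have hcast : (A1.2 : ℝ) ≤ (A2.2 : ℝ) := Nat.cast_le.mpr h2
    unfold Jcost Lcost
    linarith
  exact min_le_min (min_le_min (key _) (key _)) (min_le_min (key _) (key _))

end AoI
end

section
/- Let V_0 ≡ 0 and V_{m+1} = T V_m be the value-iteration sequence. Then for every m ∈ ℕ, the iterate V_m is AoI-monotone: for every h ∈ ℋ and all states A¹ = (Al¹, Ar¹), A² = (Al², Ar²) ∈ 𝒜 with Al¹ ≤ Al² and Ar¹ ≤ Ar², one has V_m(A¹, h) ≤ V_m(A², h). (This is the monotonicity in Al and Ar of the value function, Lemma 3, established at the level of the value-iteration iterates.) -/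
open Finset

namespace AoI

theorem value_iterates_aoi_monotone (Al_max Ar_max : ℕ) (hAl : 1 ≤ Al_max) (hAr : 1 ≤ Ar_max)
    (H : Finset ℝ) (hH : H.Nonempty)
    (p : ℝ → ℝ) (hp0 : ∀ h ∈ H, 0 ≤ p h) (hp1 : ∑ h ∈ H, p h = 1)
    (Cs : ℝ) (hCs : 0 ≤ Cs) (Cu : ℝ → ℝ) (hCu : ∀ h ∈ H, 0 ≤ Cu h)
    (lam : ℝ) (hlam : 0 ≤ lam)
    (Vseq : ℕ → ℕ × ℕ → ℝ → ℝ)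
    (hV0 : Vseq 0 = fun _ _ => 0)
    (hVsucc : ∀ m, Vseq (m + 1) = Tbell Al_max Ar_max H p Cs Cu lam (Vseq m)) :
    ∀ m, AoIMonotone Al_max Ar_max H (Vseq m) := by
  intro m
  induction m with
  | zero => intro h _ A1 A2 _ _ _ _; simp [hV0]
  | succ m ih =>
    intro h hh A1 A2 hA1 hA2 h1 h2
    have key : ∀ w : Bool × Bool,
        Jcost Al_max Ar_max H p Cs Cu lam (Vseq m) A1 h w ≤
        Jcost Al_max Ar_max H p Cs Cu lam (Vseq m) A2 h w := by
      intro w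
      unfold Jcost Lcost
      have hsum : ∑ h' ∈ H, p h' * Vseq m (next Al_max Ar_max A1 w) h' ≤
          ∑ h' ∈ H, p h' * Vseq m (next Al_max Ar_max A2 w) h' := by
        apply Finset.sum_le_sum
        intro h' hh'
        have hmem1 : memA Al_max Ar_max (next Al_max Ar_max A1 w) := by
          obtain ⟨a,b,c,d⟩ := hA1
          unfold memA next
          dsimp only
          constructorm* _ ∧ _ <;> split <;> omega
        have hmem2 : memA Al_max Ar_max (next Al_max Ar_max A2 w) := by
          obtain ⟨a,b,c,d⟩ := hA2
          unfold memA next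
          dsimp only
          constructorm* _ ∧ _ <;> split <;> omega
        have hm1 : (next Al_max Ar_max A1 w).1 ≤ (next Al_max Ar_max A2 w).1 := by
          unfold next; dsimp only; split <;> omega
        have hm2 : (next Al_max Ar_max A1 w).2 ≤ (next Al_max Ar_max A2 w).2 := by
          unfold next; dsimp only; split <;> omega
        exact mul_le_mul_of_nonneg_left (ih h' hh' _ _ hmem1 hmem2 hm1 hm2) (hp0 h' hh')
      have : (A1.2 : ℝ) ≤ (A2.2 : ℝ) := Nat.cast_le.mpr h2
      linarith
    rw [hVsucc]
    unfold Tbell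
    exact min_le_min (min_le_min (key _) (key _)) (min_le_min (key _) (key _))

end AoI
end

section
/- Suppose the updating cost Cu : ℋ → ℝ is nonincreasing on ℋ (i.e., h¹ ≤ h² implies Cu(h¹) ≥ Cu(h²)). If V : 𝒜 × ℋ → ℝ is nonincreasing in the channel state (for every A ∈ 𝒜 and h¹ ≤ h² in ℋ, V(A, h¹) ≥ V(A, h²)), then T V is also nonincreasing in the channel state: for every A ∈ 𝒜 and h¹ ≤ h² in ℋ, (T V)(A, h¹) ≥ (T V)(A, h²). -/
open Finset

namespace AoI

theorem bellman_preserves_chan_antitone (Al_max Ar_max : ℕ) (hAl : 1 ≤ Al_max) (hAr : 1 ≤ Ar_max)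
    (H : Finset ℝ) (hH : H.Nonempty)
    (p : ℝ → ℝ) (hp0 : ∀ h ∈ H, 0 ≤ p h) (hp1 : ∑ h ∈ H, p h = 1)
    (Cs : ℝ) (hCs : 0 ≤ Cs) (Cu : ℝ → ℝ) (hCu : ∀ h ∈ H, 0 ≤ Cu h)
    (lam : ℝ) (hlam : 0 ≤ lam)
    (hCuMono : ∀ h1 ∈ H, ∀ h2 ∈ H, h1 ≤ h2 → Cu h2 ≤ Cu h1)
    (V : ℕ × ℕ → ℝ → ℝ) (hV : ChanAntitone Al_max Ar_max H V) :
    ChanAntitone Al_max Ar_max H (Tbell Al_max Ar_max H p Cs Cu lam V) := by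
  intro A hA h1 hH1 h2 hH2 hle
  have key : ∀ w : Bool × Bool, Jcost Al_max Ar_max H p Cs Cu lam V A h2 w ≤
      Jcost Al_max Ar_max H p Cs Cu lam V A h1 w := by
    intro w
    unfold Jcost Lcost
    apply add_le_add_left
    apply add_le_add_right
    apply mul_le_mul_of_nonneg_left _ hlam
    apply add_le_add_right
    split_ifs
    · exact hCuMono h1 hH1 h2 hH2 hle
    · exact le_refl 0
  exact min_le_min (min_le_min (key _) (key _)) (min_le_min (key _) (key _))

end AoI
end

section
/- Suppose the updating cost Cu : ℋ → ℝ is nonincreasing on ℋ. Let V_0 ≡ 0 and V_{m+1} = T V_m be the value-iteration sequence. Then for every m ∈ ℕ, the iterate V_m is nonincreasing in the channel state: for every A ∈ 𝒜 and all h¹ ≤ h² in ℋ, V_m(A, h¹) ≥ V_m(A, h²). -/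
open Finset

namespace AoI

theorem value_iterates_chan_antitone (Al_max Ar_max : ℕ) (hAl : 1 ≤ Al_max) (hAr : 1 ≤ Ar_max)
    (H : Finset ℝ) (hH : H.Nonempty)
    (p : ℝ → ℝ) (hp0 : ∀ h ∈ H, 0 ≤ p h) (hp1 : ∑ h ∈ H, p h = 1)
    (Cs : ℝ) (hCs : 0 ≤ Cs) (Cu : ℝ → ℝ) (hCu : ∀ h ∈ H, 0 ≤ Cu h)
    (lam : ℝ) (hlam : 0 ≤ lam)
    (hCuMono : ∀ h1 ∈ H, ∀ h2 ∈ H, h1 ≤ h2 → Cu h2 ≤ Cu h1)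
    (Vseq : ℕ → ℕ × ℕ → ℝ → ℝ)
    (hV0 : Vseq 0 = fun _ _ => 0)
    (hVsucc : ∀ m, Vseq (m + 1) = Tbell Al_max Ar_max H p Cs Cu lam (Vseq m)) :
    ∀ m, ChanAntitone Al_max Ar_max H (Vseq m) := by
  intro m
  cases m with
  | zero => intro A _ h1 _ h2 _ _; simp [hV0]
  | succ m =>
    intro A _ h1 h1H h2 h2H h12
    rw [hVsucc]
    have hJ : ∀ w : Bool × Bool,
        Jcost Al_max Ar_max H p Cs Cu lam (Vseq m) A h2 w ≤
        Jcost Al_max Ar_max H p Cs Cu lam (Vseq m) A h1 w := by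
      intro w
      unfold Jcost Lcost
      have : (if w.2 then Cu h2 else 0) ≤ (if w.2 then Cu h1 else 0) := by
        cases w.2 <;> simp [hCuMono h1 h1H h2 h2H h12]
      nlinarith [this]
    unfold Tbell
    exact min_le_min (min_le_min (hJ _) (hJ _)) (min_le_min (hJ _) (hJ _))

end AoI
end

section
/- (Lemma 4, Property A, sampling part.) Let V : 𝒜 × ℋ → ℝ be AoI-monotone. Then for every h ∈ ℋ and every fixed Ar ∈ {1,…,Âr}, the difference ΔJ(Al) := J_V((Al,Ar), h, (0,0)) − J_V((Al,Ar), h, (1,0)) is nondecreasing in Al; that is, for all 1 ≤ Al¹ ≤ Al² ≤ Âl, ΔJ(Al¹) ≤ ΔJ(Al²). -/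
open Finset

namespace AoI

theorem diffJ_idle_vs_sample_mono_in_Al (Al_max Ar_max : ℕ) (hAl : 1 ≤ Al_max) (hAr : 1 ≤ Ar_max)
    (H : Finset ℝ) (hH : H.Nonempty)
    (p : ℝ → ℝ) (hp0 : ∀ h ∈ H, 0 ≤ p h) (hp1 : ∑ h ∈ H, p h = 1)
    (Cs : ℝ) (hCs : 0 ≤ Cs) (Cu : ℝ → ℝ) (hCu : ∀ h ∈ H, 0 ≤ Cu h)
    (lam : ℝ) (hlam : 0 ≤ lam)
    (V : ℕ × ℕ → ℝ → ℝ) (hV : AoIMonotone Al_max Ar_max H V)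
    (h : ℝ) (hh : h ∈ H) (Ar : ℕ) (hAr1 : 1 ≤ Ar) (hAr2 : Ar ≤ Ar_max)
    (Al1 Al2 : ℕ) (hAl1 : 1 ≤ Al1) (h12 : Al1 ≤ Al2) (hAl2 : Al2 ≤ Al_max) :
    Jcost Al_max Ar_max H p Cs Cu lam V (Al1, Ar) h (false, false) -
      Jcost Al_max Ar_max H p Cs Cu lam V (Al1, Ar) h (true, false) ≤
    Jcost Al_max Ar_max H p Cs Cu lam V (Al2, Ar) h (false, false) -
      Jcost Al_max Ar_max H p Cs Cu lam V (Al2, Ar) h (true, false) := by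
  simp only [Jcost, Lcost, next]
  simp only [Bool.false_eq_true, if_false, if_true]
  have key : ∀ h' ∈ H, p h' * V (min (Al1 + 1) Al_max, min (Ar + 1) Ar_max) h'
      ≤ p h' * V (min (Al2 + 1) Al_max, min (Ar + 1) Ar_max) h' := by
    intro h' hh'
    apply mul_le_mul_of_nonneg_left _ (hp0 h' hh')
    apply hV h' hh'
    · exact ⟨le_min (by omega) hAl, min_le_right _ _, le_min (by omega) hAr, min_le_right _ _⟩
    · exact ⟨le_min (by omega) hAl, min_le_right _ _, le_min (by omega) hAr, min_le_right _ _⟩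
    · exact min_le_min (by omega) le_rfl
    · exact le_rfl
  have := Finset.sum_le_sum key
  linarith

end AoI
end

section
/- (Lemma 4, Property A, updating part.) Let V : 𝒜 × ℋ → ℝ be AoI-monotone. Then for every h ∈ ℋ, every fixed Al ∈ {1,…,Âl}, and every w′ ∈ {(0,1), (1,1)}, the difference ΔJ(Ar) := J_V((Al,Ar), h, (0,0)) − J_V((Al,Ar), h, w′) is nondecreasing in Ar; that is, for all 1 ≤ Ar¹ ≤ Ar² ≤ Âr, ΔJ(Ar¹) ≤ ΔJ(Ar²). -/
open Finset

namespace AoI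

theorem diffJ_idle_vs_update_mono_in_Ar (Al_max Ar_max : ℕ) (hAl : 1 ≤ Al_max) (hAr : 1 ≤ Ar_max)
    (H : Finset ℝ) (hH : H.Nonempty)
    (p : ℝ → ℝ) (hp0 : ∀ h ∈ H, 0 ≤ p h) (hp1 : ∑ h ∈ H, p h = 1)
    (Cs : ℝ) (hCs : 0 ≤ Cs) (Cu : ℝ → ℝ) (hCu : ∀ h ∈ H, 0 ≤ Cu h)
    (lam : ℝ) (hlam : 0 ≤ lam)
    (V : ℕ × ℕ → ℝ → ℝ) (hV : AoIMonotone Al_max Ar_max H V)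
    (h : ℝ) (hh : h ∈ H) (Al : ℕ) (hAl1 : 1 ≤ Al) (hAl2 : Al ≤ Al_max)
    (w' : Bool × Bool) (hw' : w' = (false, true) ∨ w' = (true, true))
    (Ar1 Ar2 : ℕ) (hAr1 : 1 ≤ Ar1) (h12 : Ar1 ≤ Ar2) (hAr2 : Ar2 ≤ Ar_max) :
    Jcost Al_max Ar_max H p Cs Cu lam V (Al, Ar1) h (false, false) -
      Jcost Al_max Ar_max H p Cs Cu lam V (Al, Ar1) h w' ≤
    Jcost Al_max Ar_max H p Cs Cu lam V (Al, Ar2) h (false, false) -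
      Jcost Al_max Ar_max H p Cs Cu lam V (Al, Ar2) h w' := by
  have hkey : ∑ h' ∈ H, p h' * V (next Al_max Ar_max (Al, Ar1) (false, false)) h' ≤
      ∑ h' ∈ H, p h' * V (next Al_max Ar_max (Al, Ar2) (false, false)) h' := by
    apply Finset.sum_le_sum
    intro h' hh'
    apply mul_le_mul_of_nonneg_left _ (hp0 h' hh')
    apply hV h' hh'
    · exact ⟨le_min (Nat.le_add_left 1 Al) hAl,
        min_le_right _ _, le_min (Nat.le_add_left 1 Ar1) hAr, min_le_right _ _⟩
    · exact ⟨le_min (Nat.le_add_left 1 Al) hAl,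
        min_le_right _ _, le_min (Nat.le_add_left 1 Ar2) hAr, min_le_right _ _⟩
    · exact le_refl _
    · exact min_le_min (Nat.add_le_add_right h12 1) le_rfl
  have hsame : next Al_max Ar_max (Al, Ar1) w' = next Al_max Ar_max (Al, Ar2) w' := by
    rcases hw' with rfl | rfl <;> simp [next]
  have : (Ar1 : ℝ) ≤ Ar2 := Nat.cast_le.mpr h12
  simp only [next, Bool.false_eq_true, if_false] at hkey
  rcases hw' with rfl | rfl <;>
    simp only [Jcost, Lcost, hsame, next, if_true, Bool.false_eq_true, if_false] <;>
    linarith [hkey]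

end AoI
end

section
/- (Lemma 4, Property B.) Let V : 𝒜 × ℋ → ℝ be AoI-monotone. Then for every h ∈ ℋ, every fixed Al ∈ {1,…,Âl}, every w ∈ {(0,1), (1,1)}, and every w′ ∈ 𝒲 with w′ ≠ w, the difference ΔJ(Ar) := J_V((Al,Ar), h, w) − J_V((Al,Ar), h, w′) is nonincreasing in Ar; that is, for all 1 ≤ Ar¹ ≤ Ar² ≤ Âr, ΔJ(Ar¹) ≥ ΔJ(Ar²). -/
open Finset

namespace AoI

theorem diffJ_update_vs_other_antitone_in_Ar (Al_max Ar_max : ℕ) (hAl : 1 ≤ Al_max) (hAr : 1 ≤ Ar_max)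
    (H : Finset ℝ) (hH : H.Nonempty)
    (p : ℝ → ℝ) (hp0 : ∀ h ∈ H, 0 ≤ p h) (hp1 : ∑ h ∈ H, p h = 1)
    (Cs : ℝ) (hCs : 0 ≤ Cs) (Cu : ℝ → ℝ) (hCu : ∀ h ∈ H, 0 ≤ Cu h)
    (lam : ℝ) (hlam : 0 ≤ lam)
    (V : ℕ × ℕ → ℝ → ℝ) (hV : AoIMonotone Al_max Ar_max H V)
    (h : ℝ) (hh : h ∈ H) (Al : ℕ) (hAl1 : 1 ≤ Al) (hAl2 : Al ≤ Al_max)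
    (w : Bool × Bool) (hw : w = (false, true) ∨ w = (true, true))
    (w' : Bool × Bool) (hw' : w' ≠ w)
    (Ar1 Ar2 : ℕ) (hAr1 : 1 ≤ Ar1) (h12 : Ar1 ≤ Ar2) (hAr2 : Ar2 ≤ Ar_max) :
    Jcost Al_max Ar_max H p Cs Cu lam V (Al, Ar2) h w -
      Jcost Al_max Ar_max H p Cs Cu lam V (Al, Ar2) h w' ≤
    Jcost Al_max Ar_max H p Cs Cu lam V (Al, Ar1) h w -
      Jcost Al_max Ar_max H p Cs Cu lam V (Al, Ar1) h w' := by
  have hw2 : w.2 = true := by rcases hw with rfl | rfl <;> rfl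
  have hnextw : next Al_max Ar_max (Al, Ar1) w = next Al_max Ar_max (Al, Ar2) w := by
    simp [next, hw2]
  have key : ∑ h' ∈ H, p h' * V (next Al_max Ar_max (Al, Ar1) w') h' ≤
      ∑ h' ∈ H, p h' * V (next Al_max Ar_max (Al, Ar2) w') h' := by
    apply Finset.sum_le_sum
    intro h' hh'
    apply mul_le_mul_of_nonneg_left _ (hp0 h' hh')
    obtain ⟨s', u'⟩ := w'
    cases u' with
    | true => simp [next]
    | false =>
      have hm : ∀ Ar, 1 ≤ Ar → Ar ≤ Ar_max →
          memA Al_max Ar_max (next Al_max Ar_max (Al, Ar) (s', false)) := by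
        intro Ar h1 h2
        cases s' <;> refine ⟨?_, ?_, ?_, ?_⟩ <;> simp [next] <;> omega
      exact hV h' hh' _ _ (hm Ar1 hAr1 (le_trans h12 hAr2)) (hm Ar2 (le_trans hAr1 h12) hAr2)
        (le_refl _) (by simp [next]; omega)
  simp only [Jcost, Lcost, hnextw]
  push_cast
  linarith [key]

end AoI
end

section
/- (Lemma 4, Property C.) Let V : 𝒜 × ℋ → ℝ be AoI-monotone. Then for every h ∈ ℋ, every fixed Ar ∈ {1,…,Âr}, and every w′ ∈ 𝒲 with w′ ≠ (1,0), the difference ΔJ(Al) := J_V((Al,Ar), h, (1,0)) − J_V((Al,Ar), h, w′) is nonincreasing in Al; that is, for all 1 ≤ Al¹ ≤ Al² ≤ Âl, ΔJ(Al¹) ≥ ΔJ(Al²). -/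
open Finset

namespace AoI

theorem diffJ_sample_vs_other_antitone_in_Al (Al_max Ar_max : ℕ) (hAl : 1 ≤ Al_max) (hAr : 1 ≤ Ar_max)
    (H : Finset ℝ) (hH : H.Nonempty)
    (p : ℝ → ℝ) (hp0 : ∀ h ∈ H, 0 ≤ p h) (hp1 : ∑ h ∈ H, p h = 1)
    (Cs : ℝ) (hCs : 0 ≤ Cs) (Cu : ℝ → ℝ) (hCu : ∀ h ∈ H, 0 ≤ Cu h)
    (lam : ℝ) (hlam : 0 ≤ lam)
    (V : ℕ × ℕ → ℝ → ℝ) (hV : AoIMonotone Al_max Ar_max H V)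
    (h : ℝ) (hh : h ∈ H) (Ar : ℕ) (hAr1 : 1 ≤ Ar) (hAr2 : Ar ≤ Ar_max)
    (w' : Bool × Bool) (hw' : w' ≠ (true, false))
    (Al1 Al2 : ℕ) (hAl1 : 1 ≤ Al1) (h12 : Al1 ≤ Al2) (hAl2 : Al2 ≤ Al_max) :
    Jcost Al_max Ar_max H p Cs Cu lam V (Al2, Ar) h (true, false) -
      Jcost Al_max Ar_max H p Cs Cu lam V (Al2, Ar) h w' ≤
    Jcost Al_max Ar_max H p Cs Cu lam V (Al1, Ar) h (true, false) -
      Jcost Al_max Ar_max H p Cs Cu lam V (Al1, Ar) h w' := by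
  have key : ∑ h' ∈ H, p h' * V (next Al_max Ar_max (Al1, Ar) w') h' ≤
      ∑ h' ∈ H, p h' * V (next Al_max Ar_max (Al2, Ar) w') h' := by
    apply Finset.sum_le_sum
    intro h' hh'
    apply mul_le_mul_of_nonneg_left _ (hp0 h' hh')
    rcases w' with ⟨s, u⟩
    have h1 : memA Al_max Ar_max (next Al_max Ar_max (Al1, Ar) (s, u)) := by
      cases s <;> cases u <;> (simp [next, memA] <;> omega)
    have h2 : memA Al_max Ar_max (next Al_max Ar_max (Al2, Ar) (s, u)) := by
      cases s <;> cases u <;> (simp [next, memA] <;> omega)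
    apply hV h' hh' _ _ h1 h2 <;>
      (cases s <;> cases u <;> simp [next] <;> omega)
  have e1 : next Al_max Ar_max (Al2, Ar) (true, false)
      = next Al_max Ar_max (Al1, Ar) (true, false) := rfl
  have e2 : Lcost Cs Cu lam (Al2, Ar) h w' = Lcost Cs Cu lam (Al1, Ar) h w' := rfl
  have e3 : Lcost Cs Cu lam (Al2, Ar) h (true, false)
      = Lcost Cs Cu lam (Al1, Ar) h (true, false) := rfl
  simp only [Jcost, e1, e2, e3]
  linarith [key]

end AoI
end

section
/- (Theorem 1, Property B: threshold structure of the optimal updating action (0,1) in Ar.) Let V : 𝒜 × ℋ → ℝ be AoI-monotone. If action (0,1) dominates every other action at state ((Al, Ar), h) with respect to V, then for every Ar′ with Ar ≤ Ar′ ≤ Âr, action (0,1) dominates every other action at state ((Al, Ar′), h) with respect to V. Hence, for each fixed Al and h, the set of Ar at which (0,1) dominates all other actions is upward closed (of threshold type). -/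
open Finset

namespace AoI

theorem threshold_update_action (Al_max Ar_max : ℕ) (hAl : 1 ≤ Al_max) (hAr : 1 ≤ Ar_max)
    (H : Finset ℝ) (hH : H.Nonempty)
    (p : ℝ → ℝ) (hp0 : ∀ h ∈ H, 0 ≤ p h) (hp1 : ∑ h ∈ H, p h = 1)
    (Cs : ℝ) (hCs : 0 ≤ Cs) (Cu : ℝ → ℝ) (hCu : ∀ h ∈ H, 0 ≤ Cu h)
    (lam : ℝ) (hlam : 0 ≤ lam)
    (V : ℕ × ℕ → ℝ → ℝ) (hV : AoIMonotone Al_max Ar_max H V)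
    (h : ℝ) (hh : h ∈ H) (Al Ar : ℕ) (hmem : memA Al_max Ar_max (Al, Ar))
    (hdom : ∀ w' : Bool × Bool, w' ≠ (false, true) →
      Dominates Al_max Ar_max H p Cs Cu lam V (Al, Ar) h (false, true) w') :
    ∀ Ar' : ℕ, Ar ≤ Ar' → Ar' ≤ Ar_max → ∀ w' : Bool × Bool, w' ≠ (false, true) →
      Dominates Al_max Ar_max H p Cs Cu lam V (Al, Ar') h (false, true) w' := by
  intro Ar' hle hAr' w' hw'
  have hdomw := hdom w' hw'
  obtain ⟨hAl1, hAl2, hAr1, hAr2⟩ := hmem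
  -- the next state under (false, true) does not depend on Ar
  have hnext01 : next Al_max Ar_max (Al, Ar') (false, true)
      = next Al_max Ar_max (Al, Ar) (false, true) := by simp [next]
  -- monotonicity of the expected continuation cost in Ar
  have key : ∑ h' ∈ H, p h' * V (next Al_max Ar_max (Al, Ar) w') h'
      ≤ ∑ h' ∈ H, p h' * V (next Al_max Ar_max (Al, Ar') w') h' := by
    apply Finset.sum_le_sum
    intro h' hh'
    apply mul_le_mul_of_nonneg_left _ (hp0 h' hh')
    rcases w' with ⟨s, u⟩
    apply hV h' hh'
    · refine ⟨?_, ?_, ?_, ?_⟩ <;>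
        [cases s; cases s; cases u; cases u] <;> simp [next] <;> omega
    · refine ⟨?_, ?_, ?_, ?_⟩ <;>
        [cases s; cases s; cases u; cases u] <;> simp [next] <;> omega
    · cases s <;> simp [next]
    · cases u <;> simp [next] <;> omega
  have hcast : (Ar : ℝ) ≤ (Ar' : ℝ) := by exact_mod_cast hle
  unfold Dominates Jcost Lcost at *
  rw [hnext01]
  simp only at *
  linarith

end AoI
end

section
/- (Theorem 1, Property C: threshold structure of the optimal sampling action (1,0) in Al.) Let V : 𝒜 × ℋ → ℝ be AoI-monotone. If action (1,0) dominates every other action at state ((Al, Ar), h) with respect to V, then for every Al′ with Al ≤ Al′ ≤ Âl, action (1,0) dominates every other action at state ((Al′, Ar), h) with respect to V. Hence, for each fixed Ar and h, the set of Al at which (1,0) dominates all other actions is upward closed (of threshold type). -/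
open Finset

namespace AoI

theorem threshold_sample_action (Al_max Ar_max : ℕ) (hAl : 1 ≤ Al_max) (hAr : 1 ≤ Ar_max)
    (H : Finset ℝ) (hH : H.Nonempty)
    (p : ℝ → ℝ) (hp0 : ∀ h ∈ H, 0 ≤ p h) (hp1 : ∑ h ∈ H, p h = 1)
    (Cs : ℝ) (hCs : 0 ≤ Cs) (Cu : ℝ → ℝ) (hCu : ∀ h ∈ H, 0 ≤ Cu h)
    (lam : ℝ) (hlam : 0 ≤ lam)
    (V : ℕ × ℕ → ℝ → ℝ) (hV : AoIMonotone Al_max Ar_max H V)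
    (h : ℝ) (hh : h ∈ H) (Al Ar : ℕ) (hmem : memA Al_max Ar_max (Al, Ar))
    (hdom : ∀ w' : Bool × Bool, w' ≠ (true, false) →
      Dominates Al_max Ar_max H p Cs Cu lam V (Al, Ar) h (true, false) w') :
    ∀ Al' : ℕ, Al ≤ Al' → Al' ≤ Al_max → ∀ w' : Bool × Bool, w' ≠ (true, false) →
      Dominates Al_max Ar_max H p Cs Cu lam V (Al', Ar) h (true, false) w' := by
  intro Al' hle hle' w' hw'
  have hmemAl' : memA Al_max Ar_max (Al', Ar) :=
    ⟨le_trans hmem.1 hle, hle', hmem.2.2.1, hmem.2.2.2⟩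
  have hmemN : ∀ a : ℕ, 1 ≤ a → a ≤ Al_max → ∀ w : Bool × Bool,
      memA Al_max Ar_max (next Al_max Ar_max (a, Ar) w) := by
    intro a h1 h2 w
    have := hmem.2.2.1
    have := hmem.2.2.2
    unfold next memA
    refine ⟨?_, ?_, ?_, ?_⟩ <;> simp only <;> split_ifs <;> omega
  have key : ∀ w : Bool × Bool,
      Jcost Al_max Ar_max H p Cs Cu lam V (Al, Ar) h w ≤
      Jcost Al_max Ar_max H p Cs Cu lam V (Al', Ar) h w := by
    intro w
    unfold Jcost
    have hL : Lcost Cs Cu lam (Al, Ar) h w = Lcost Cs Cu lam (Al', Ar) h w := rfl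
    rw [hL]
    apply add_le_add le_rfl
    apply Finset.sum_le_sum
    intro h' hh'
    have hVle : V (next Al_max Ar_max (Al, Ar) w) h' ≤
        V (next Al_max Ar_max (Al', Ar) w) h' := by
      apply hV h' hh' _ _ (hmemN Al hmem.1 hmem.2.1 w)
        (hmemN Al' (le_trans hmem.1 hle) hle' w)
      · unfold next; simp only; split_ifs <;> omega
      · unfold next; simp only; split_ifs <;> omega
    exact mul_le_mul_of_nonneg_left hVle (hp0 h' hh')
  have heq : Jcost Al_max Ar_max H p Cs Cu lam V (Al', Ar) h (true, false) =
      Jcost Al_max Ar_max H p Cs Cu lam V (Al, Ar) h (true, false) := rfl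
  exact heq.trans_le ((hdom w' hw').trans (key w'))

end AoI
end

section
/- (Theorem 1, Property D: threshold structure of the joint sample-and-update action (1,1) in Ar.) Let V : 𝒜 × ℋ → ℝ be AoI-monotone. If action (1,1) dominates every other action at state ((Al, Ar), h) with respect to V, then for every Ar′ with Ar ≤ Ar′ ≤ Âr, action (1,1) dominates every other action at state ((Al, Ar′), h) with respect to V. Hence, for each fixed Al and h, the set of Ar at which (1,1) dominates all other actions is upward closed (of threshold type). -/
open Finset

namespace AoI

theorem threshold_sample_and_update_action (Al_max Ar_max : ℕ) (hAl : 1 ≤ Al_max) (hAr : 1 ≤ Ar_max)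
    (H : Finset ℝ) (hH : H.Nonempty)
    (p : ℝ → ℝ) (hp0 : ∀ h ∈ H, 0 ≤ p h) (hp1 : ∑ h ∈ H, p h = 1)
    (Cs : ℝ) (hCs : 0 ≤ Cs) (Cu : ℝ → ℝ) (hCu : ∀ h ∈ H, 0 ≤ Cu h)
    (lam : ℝ) (hlam : 0 ≤ lam)
    (V : ℕ × ℕ → ℝ → ℝ) (hV : AoIMonotone Al_max Ar_max H V)
    (h : ℝ) (hh : h ∈ H) (Al Ar : ℕ) (hmem : memA Al_max Ar_max (Al, Ar))
    (hdom : ∀ w' : Bool × Bool, w' ≠ (true, true) →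
      Dominates Al_max Ar_max H p Cs Cu lam V (Al, Ar) h (true, true) w') :

    ∀ Ar' : ℕ, Ar ≤ Ar' → Ar' ≤ Ar_max → ∀ w' : Bool × Bool, w' ≠ (true, true) →
      Dominates Al_max Ar_max H p Cs Cu lam V (Al, Ar') h (true, true) w' := by
  intro Ar' hge hle w' hw'
  have hd := hdom w' hw'
  obtain ⟨s, u⟩ := w'
  unfold Dominates Jcost Lcost next at hd ⊢
  cases u
  · -- u = false: next of w' depends on Ar, use monotonicity
    have hsum : ∑ h' ∈ H, p h' * V (if s then 1 else min (Al + 1) Al_max,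
          min (Ar + 1) Ar_max) h'
        ≤ ∑ h' ∈ H, p h' * V (if s then 1 else min (Al + 1) Al_max,
          min (Ar' + 1) Ar_max) h' := by
      apply Finset.sum_le_sum
      intro h' hh'
      refine mul_le_mul_of_nonneg_left (hV h' hh' _ _ ?_ ?_ le_rfl (by omega)) (hp0 h' hh')
      · cases s <;> simp [memA] <;> omega
      · cases s <;> simp [memA] <;> omega
    simp only at hd ⊢
    push_cast
    push_cast at hd
    linarith
  · -- u = true: w' = (s,true), next independent of Ar
    simp only at hd ⊢
    push_cast
    push_cast at hd
    linarith


end AoI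
end

section
/- (Theorem 1, Property A: structure of the idle region.) Let V : 𝒜 × ℋ → ℝ be AoI-monotone and fix h ∈ ℋ. Then: (i) if the idle action (0,0) dominates the sampling action (1,0) at state ((Al, Ar), h) with respect to V, then (0,0) dominates (1,0) at ((Al′, Ar), h) for every 1 ≤ Al′ ≤ Al; and (ii) if (0,0) dominates both (0,1) and (1,1) at state ((Al, Ar), h) with respect to V, then (0,0) dominates both (0,1) and (1,1) at ((Al, Ar′), h) for every 1 ≤ Ar′ ≤ Ar. -/
open Finset

namespace AoI

lemma sumV_mono (H : Finset ℝ) (p : ℝ → ℝ) (hp0 : ∀ h ∈ H, 0 ≤ p h)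
    (V : ℕ × ℕ → ℝ → ℝ) (A1 A2 : ℕ × ℕ) (hle : ∀ h' ∈ H, V A1 h' ≤ V A2 h') :
    ∑ h' ∈ H, p h' * V A1 h' ≤ ∑ h' ∈ H, p h' * V A2 h' :=
  Finset.sum_le_sum fun h' hh' => mul_le_mul_of_nonneg_left (hle h' hh') (hp0 h' hh')

theorem idle_region_structure (Al_max Ar_max : ℕ) (hAl : 1 ≤ Al_max) (hAr : 1 ≤ Ar_max)
    (H : Finset ℝ) (hH : H.Nonempty)
    (p : ℝ → ℝ) (hp0 : ∀ h ∈ H, 0 ≤ p h) (hp1 : ∑ h ∈ H, p h = 1)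
    (Cs : ℝ) (hCs : 0 ≤ Cs) (Cu : ℝ → ℝ) (hCu : ∀ h ∈ H, 0 ≤ Cu h)
    (lam : ℝ) (hlam : 0 ≤ lam)
    (V : ℕ × ℕ → ℝ → ℝ) (hV : AoIMonotone Al_max Ar_max H V)
    (h : ℝ) (hh : h ∈ H) :
    (∀ Al Ar : ℕ, memA Al_max Ar_max (Al, Ar) →
      Dominates Al_max Ar_max H p Cs Cu lam V (Al, Ar) h (false, false) (true, false) →
      ∀ Al' : ℕ, 1 ≤ Al' → Al' ≤ Al →
        Dominates Al_max Ar_max H p Cs Cu lam V (Al', Ar) h (false, false) (true, false)) ∧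
    (∀ Al Ar : ℕ, memA Al_max Ar_max (Al, Ar) →
      Dominates Al_max Ar_max H p Cs Cu lam V (Al, Ar) h (false, false) (false, true) →
      Dominates Al_max Ar_max H p Cs Cu lam V (Al, Ar) h (false, false) (true, true) →
      ∀ Ar' : ℕ, 1 ≤ Ar' → Ar' ≤ Ar →
        Dominates Al_max Ar_max H p Cs Cu lam V (Al, Ar') h (false, false) (false, true) ∧
        Dominates Al_max Ar_max H p Cs Cu lam V (Al, Ar') h (false, false) (true, true)) := by
  constructor
  · intro Al Ar hmem hdom Al' h1 h2
    obtain ⟨_, hAlmax, hAr1, hArmax⟩ := hmem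
    simp only [Dominates, Jcost, Lcost, next] at hdom ⊢
    simp only [Bool.false_eq_true, if_false, if_true] at hdom ⊢
    have key : ∑ h' ∈ H, p h' * V (min (Al' + 1) Al_max, min (Ar + 1) Ar_max) h'
        ≤ ∑ h' ∈ H, p h' * V (min (Al + 1) Al_max, min (Ar + 1) Ar_max) h' := by
      refine sumV_mono H p hp0 V _ _ fun h' hh' => hV h' hh' _ _ ?_ ?_ ?_ ?_
      · exact ⟨by omega, by omega, by omega, by omega⟩
      · exact ⟨by omega, by omega, by omega, by omega⟩
      · simp; omega
      · simp
    linarith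
  · intro Al Ar hmem hd1 hd2 Ar' h1 h2
    obtain ⟨hAl1, hAlmax, _, hArmax⟩ := hmem
    simp only [Dominates, Jcost, Lcost, next] at hd1 hd2 ⊢
    simp only [Bool.false_eq_true, if_false, if_true] at hd1 hd2 ⊢
    have key : ∑ h' ∈ H, p h' * V (min (Al + 1) Al_max, min (Ar' + 1) Ar_max) h'
        ≤ ∑ h' ∈ H, p h' * V (min (Al + 1) Al_max, min (Ar + 1) Ar_max) h' := by
      refine sumV_mono H p hp0 V _ _ fun h' hh' => hV h' hh' _ _ ?_ ?_ ?_ ?_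
      · exact ⟨by omega, by omega, by omega, by omega⟩
      · exact ⟨by omega, by omega, by omega, by omega⟩
      · simp
      · simp; omega
    constructor <;> linarith

end AoI
end

section
/- (Induction step of Theorem 2.) Suppose the updating cost Cu : ℋ → ℝ is nonincreasing on ℋ, and let pᴵ and pᴶ be two probability mass functions on ℋ such that pᴵ first-order stochastically dominates pᴶ. Let Vᴵ, Vᴶ : 𝒜 × ℋ → ℝ be functions such that (i) Vᴵ(A, h) ≤ Vᴶ(A, h) for all (A,h) ∈ 𝒜 × ℋ, and (ii) Vᴵ is nonincreasing in the channel state (for every A ∈ 𝒜 and all h¹ ≤ h² in ℋ, Vᴵ(A, h¹) ≥ Vᴵ(A, h²)). Then (Tᴵ Vᴵ)(A, h) ≤ (Tᴶ Vᴶ)(A, h) for all (A,h) ∈ 𝒜 × ℋ. -/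
open Finset

namespace AoI

theorem dominance_induction_step (Al_max Ar_max : ℕ) (hAl : 1 ≤ Al_max) (hAr : 1 ≤ Ar_max)
    (H : Finset ℝ) (hH : H.Nonempty)
    (pI pJ : ℝ → ℝ)
    (hpI0 : ∀ h ∈ H, 0 ≤ pI h) (hpI1 : ∑ h ∈ H, pI h = 1)
    (hpJ0 : ∀ h ∈ H, 0 ≤ pJ h) (hpJ1 : ∑ h ∈ H, pJ h = 1)
    (hdom : FOSD H pI pJ)
    (Cs : ℝ) (hCs : 0 ≤ Cs) (Cu : ℝ → ℝ) (hCu : ∀ h ∈ H, 0 ≤ Cu h)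
    (hCuMono : ∀ h1 ∈ H, ∀ h2 ∈ H, h1 ≤ h2 → Cu h2 ≤ Cu h1)
    (lam : ℝ) (hlam : 0 ≤ lam)
    (VI VJ : ℕ × ℕ → ℝ → ℝ)
    (hIJ : ∀ A : ℕ × ℕ, memA Al_max Ar_max A → ∀ h ∈ H, VI A h ≤ VJ A h)
    (hVI : ChanAntitone Al_max Ar_max H VI) :
    ∀ A : ℕ × ℕ, memA Al_max Ar_max A → ∀ h ∈ H,
      Tbell Al_max Ar_max H pI Cs Cu lam VI A h ≤
      Tbell Al_max Ar_max H pJ Cs Cu lam VJ A h := by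
  intro A hA h hh
  obtain ⟨h1, h2, h3, h4⟩ := hA
  have hnext : ∀ w : Bool × Bool, memA Al_max Ar_max (next Al_max Ar_max A w) := by
    intro w
    refine ⟨?_, ?_, ?_, ?_⟩ <;> dsimp [next] <;> split <;> omega
  have key : ∀ w : Bool × Bool,
      Jcost Al_max Ar_max H pI Cs Cu lam VI A h w ≤
      Jcost Al_max Ar_max H pJ Cs Cu lam VJ A h w := by
    intro w
    set B := next Al_max Ar_max A w with hB
    have step1 : ∑ h' ∈ H, pI h' * VI B h' ≤ ∑ h' ∈ H, pJ h' * VI B h' := by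
      have hm : ∀ x1 ∈ H, ∀ x2 ∈ H, x1 ≤ x2 → -VI B x1 ≤ -VI B x2 := by
        intro x1 hx1 x2 hx2 hle
        exact neg_le_neg (hVI B (hnext w) x1 hx1 x2 hx2 hle)
      have := hdom (fun x => -VI B x) hm
      simp only [mul_neg, Finset.sum_neg_distrib] at this
      linarith
    have step2 : ∑ h' ∈ H, pJ h' * VI B h' ≤ ∑ h' ∈ H, pJ h' * VJ B h' := by
      refine Finset.sum_le_sum fun i hi => ?_
      exact mul_le_mul_of_nonneg_left (hIJ B (hnext w) i hi) (hpJ0 i hi)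
    exact add_le_add_right (step1.trans step2) _
  exact min_le_min (min_le_min (key _) (key _)) (min_le_min (key _) (key _))

end AoI
end

section
/- (Theorem 2, value-iteration form: better channels yield smaller value functions.) Suppose the updating cost Cu : ℋ → ℝ is nonincreasing on ℋ, and let pᴵ and pᴶ be two probability mass functions on ℋ such that pᴵ first-order stochastically dominates pᴶ. Define value-iteration sequences Vᴵ_0 ≡ 0, Vᴵ_{m+1} = Tᴵ Vᴵ_m and Vᴶ_0 ≡ 0, Vᴶ_{m+1} = Tᴶ Vᴶ_m. Then for every m ∈ ℕ and every (A, h) ∈ 𝒜 × ℋ, Vᴵ_m(A, h) ≤ Vᴶ_m(A, h). -/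
open Finset

namespace AoI

lemma next_memA {Al_max Ar_max : ℕ} (hAl : 1 ≤ Al_max) (hAr : 1 ≤ Ar_max)
    {A : ℕ × ℕ} (hA : memA Al_max Ar_max A) (w : Bool × Bool) :
    memA Al_max Ar_max (next Al_max Ar_max A w) := by
  obtain ⟨h1, h2, h3, h4⟩ := hA
  rcases w with ⟨s, u⟩
  refine ⟨?_, ?_, ?_, ?_⟩ <;> cases s <;> cases u <;> simp [next] <;> omega

lemma Jcost_chanAnti (Al_max Ar_max : ℕ) (H : Finset ℝ) (p : ℝ → ℝ) (Cs : ℝ) (Cu : ℝ → ℝ)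
    (lam : ℝ) (hlam : 0 ≤ lam) (V : ℕ × ℕ → ℝ → ℝ) (A : ℕ × ℕ)
    {h1 h2 : ℝ} (hc : Cu h2 ≤ Cu h1) (w : Bool × Bool) :
    Jcost Al_max Ar_max H p Cs Cu lam V A h2 w ≤ Jcost Al_max Ar_max H p Cs Cu lam V A h1 w := by
  unfold Jcost Lcost
  have hx : (if w.2 then Cu h2 else 0) ≤ (if w.2 then Cu h1 else 0) := by
    split_ifs
    · exact hc
    · exact le_rfl
  have hmul := mul_le_mul_of_nonneg_left
    (add_le_add_left hx (if w.1 then Cs else 0)) hlam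
  linarith

lemma chanAnti_Tbell (Al_max Ar_max : ℕ) (H : Finset ℝ) (p : ℝ → ℝ) (Cs : ℝ) (Cu : ℝ → ℝ)
    (hCuMono : ∀ h1 ∈ H, ∀ h2 ∈ H, h1 ≤ h2 → Cu h2 ≤ Cu h1)
    (lam : ℝ) (hlam : 0 ≤ lam) (V : ℕ × ℕ → ℝ → ℝ) :
    ChanAntitone Al_max Ar_max H (Tbell Al_max Ar_max H p Cs Cu lam V) := by
  intro A _ h1 hh1 h2 hh2 hle
  have hc : Cu h2 ≤ Cu h1 := hCuMono h1 hh1 h2 hh2 hle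
  unfold Tbell
  exact min_le_min
    (min_le_min (Jcost_chanAnti _ _ _ _ _ _ _ hlam _ _ hc _)
      (Jcost_chanAnti _ _ _ _ _ _ _ hlam _ _ hc _))
    (min_le_min (Jcost_chanAnti _ _ _ _ _ _ _ hlam _ _ hc _)
      (Jcost_chanAnti _ _ _ _ _ _ _ hlam _ _ hc _))

lemma Jcost_step_le (Al_max Ar_max : ℕ) (hAl : 1 ≤ Al_max) (hAr : 1 ≤ Ar_max)
    (H : Finset ℝ) (pI pJ : ℝ → ℝ) (hpI0 : ∀ h ∈ H, 0 ≤ pI h)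
    (hdom : FOSD H pI pJ) (Cs : ℝ) (Cu : ℝ → ℝ) (lam : ℝ)
    (VI VJ : ℕ × ℕ → ℝ → ℝ)
    (hle : ∀ A : ℕ × ℕ, memA Al_max Ar_max A → ∀ h ∈ H, VI A h ≤ VJ A h)
    (hanti : ChanAntitone Al_max Ar_max H VJ)
    (A : ℕ × ℕ) (hA : memA Al_max Ar_max A) (h : ℝ) (w : Bool × Bool) :
    Jcost Al_max Ar_max H pI Cs Cu lam VI A h w ≤
      Jcost Al_max Ar_max H pJ Cs Cu lam VJ A h w := by
  have hmem := next_memA hAl hAr hA w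
  have h1 : ∑ h' ∈ H, pI h' * VI (next Al_max Ar_max A w) h' ≤
      ∑ h' ∈ H, pI h' * VJ (next Al_max Ar_max A w) h' :=
    Finset.sum_le_sum fun h' hh' =>
      mul_le_mul_of_nonneg_left (hle _ hmem h' hh') (hpI0 h' hh')
  have h2 := hdom (fun h' => -(VJ (next Al_max Ar_max A w) h'))
    (fun a ha b hb hab => neg_le_neg (hanti _ hmem a ha b hb hab))
  simp only [mul_neg, Finset.sum_neg_distrib, neg_le_neg_iff] at h2
  unfold Jcost
  linarith

theorem better_channel_smaller_value_iterates (Al_max Ar_max : ℕ) (hAl : 1 ≤ Al_max) (hAr : 1 ≤ Ar_max)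
    (H : Finset ℝ) (hH : H.Nonempty)
    (pI pJ : ℝ → ℝ)
    (hpI0 : ∀ h ∈ H, 0 ≤ pI h) (hpI1 : ∑ h ∈ H, pI h = 1)
    (hpJ0 : ∀ h ∈ H, 0 ≤ pJ h) (hpJ1 : ∑ h ∈ H, pJ h = 1)
    (hdom : FOSD H pI pJ)
    (Cs : ℝ) (hCs : 0 ≤ Cs) (Cu : ℝ → ℝ) (hCu : ∀ h ∈ H, 0 ≤ Cu h)
    (hCuMono : ∀ h1 ∈ H, ∀ h2 ∈ H, h1 ≤ h2 → Cu h2 ≤ Cu h1)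
    (lam : ℝ) (hlam : 0 ≤ lam)
    (VIseq VJseq : ℕ → ℕ × ℕ → ℝ → ℝ)
    (hVI0 : VIseq 0 = fun _ _ => 0)
    (hVIsucc : ∀ m, VIseq (m + 1) = Tbell Al_max Ar_max H pI Cs Cu lam (VIseq m))
    (hVJ0 : VJseq 0 = fun _ _ => 0)
    (hVJsucc : ∀ m, VJseq (m + 1) = Tbell Al_max Ar_max H pJ Cs Cu lam (VJseq m)) :
    ∀ m, ∀ A : ℕ × ℕ, memA Al_max Ar_max A → ∀ h ∈ H, VIseq m A h ≤ VJseq m A h := by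
  have hantiJ : ∀ m, ChanAntitone Al_max Ar_max H (VJseq m) := by
    intro m
    cases m with
    | zero => rw [hVJ0]; intro A _ h1 _ h2 _ _; exact le_rfl
    | succ n => rw [hVJsucc]; exact chanAnti_Tbell _ _ _ _ _ _ hCuMono _ hlam _
  intro m
  induction m with
  | zero => intro A _ h _; rw [hVI0, hVJ0]
  | succ n ih =>
    intro A hA h hh
    rw [hVIsucc, hVJsucc]
    unfold Tbell
    exact min_le_min
      (min_le_min
        (Jcost_step_le _ _ hAl hAr _ _ _ hpI0 hdom _ _ _ _ _ ih (hantiJ n) _ hA _ _)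
        (Jcost_step_le _ _ hAl hAr _ _ _ hpI0 hdom _ _ _ _ _ ih (hantiJ n) _ hA _ _))
      (min_le_min
        (Jcost_step_le _ _ hAl hAr _ _ _ hpI0 hdom _ _ _ _ _ ih (hantiJ n) _ hA _ _)
        (Jcost_step_le _ _ hAl hAr _ _ _ hpI0 hdom _ _ _ _ _ ih (hantiJ n) _ hA _ _))


end AoI
end
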